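/- arXiv:1611.05219 — 2 statements merged into one kernel-verified Lean document; each statement's English description precedes it below -/
import Mathlib

section
/- Let X be a finite set, P a stochastic matrix on X (entries ≥ 0, rows summing to 1) with a single recurrent class, and π an invariant distribution of P (π ≥ 0, Σ_x π(x) = 1, πP = π). Let Y be a finite set with |Y| > 1 and g : X → Y any map. For n ≥ 1 define the distribution p_n on Y^n by p_n(y_1,…,y_n) = Σ_{x_1 ∈ g^{-1}(y_1), …, x_n ∈ g^{-1}(y_n)} π(x_1) ∏_{ℓ=2}^{n} P(x_{ℓ-1}, x_ℓ). Fix k ≥ 1 and let Q be the k-th order Markov transition matrix on Y with Q(w,z) = p_{k+1}(w,z)/p_k(w) if p_k(w) > 0, and Q(w,z) = 1/|Y| otherwise. Then Q has a UNIQUE invariant distribution μ on Y^k, and μ = p_k, i.e., μ(y_1,…,y_k) = Σ_{x_1 ∈ g^{-1}(y_1), …, x_k ∈ g^{-1}(y_k)} π(x_1) ∏_{ℓ=2}^{k} P(x_{ℓ-1}, x_ℓ). -/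
open Finset
open scoped Classical

noncomputable section

/-- The first `k` coordinates of a length-`k+1` tuple. -/
def front {Z : Type*} {k : ℕ} (v : Fin (k + 1) → Z) : Fin k → Z :=
  fun i => v i.castSucc

/-- The last `k` coordinates of a length-`k+1` tuple. -/
def back {Z : Type*} {k : ℕ} (v : Fin (k + 1) → Z) : Fin k → Z :=
  fun i => v i.succ

/-- `p` is a probability distribution on the finite type `α`. -/
def IsProbDist {α : Type*} [Fintype α] (p : α → ℝ) : Prop :=
  (∀ a, 0 ≤ p a) ∧ ∑ a, p a = 1

/-- `Q` is a `k`-th order Markov transition matrix on `Z`. -/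
def IsTransMat {Z : Type*} [Fintype Z] {k : ℕ} (Q : (Fin k → Z) → Z → ℝ) : Prop :=
  (∀ w z, 0 ≤ Q w z) ∧ ∀ w, ∑ z, Q w z = 1

/-- `μ` is an invariant (probability) distribution for the `k`-th order transition matrix `Q`:
`μ(z₁,…,z_k) = ∑_{z₀} μ(z₀,…,z_{k-1}) Q((z₀,…,z_{k-1}), z_k)`. -/
def IsInvariantFor {Z : Type*} [Fintype Z] {k : ℕ} (μ : (Fin k → Z) → ℝ)
    (Q : (Fin k → Z) → Z → ℝ) : Prop :=
  IsProbDist μ ∧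
    ∀ w : Fin k → Z,
      μ w = ∑ z0 : Z,
        μ (front (Fin.cons z0 w)) *
          Q (front (Fin.cons z0 w)) ((Fin.cons z0 w : Fin (k + 1) → Z) (Fin.last k))

/-- `P` is a (first-order) stochastic matrix. -/
def IsStochastic {S : Type*} [Fintype S] (P : Matrix S S ℝ) : Prop :=
  (∀ i j, 0 ≤ P i j) ∧ ∀ i, ∑ j, P i j = 1

/-- State `j` is accessible from state `i` under the stochastic matrix `P`. -/
def Accessible {S : Type*} [Fintype S] (P : Matrix S S ℝ) (i j : S) : Prop :=
  ∃ n : ℕ, 1 ≤ n ∧ 0 < (P ^ n) i j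

/-- State `i` is recurrent for the stochastic matrix `P`. -/
def Recurrent {S : Type*} [Fintype S] (P : Matrix S S ℝ) (i : S) : Prop :=
  ∀ j, Accessible P i j → Accessible P j i

/-- `P` has a single recurrent class. -/
def SingleRecurrentClass {S : Type*} [Fintype S] (P : Matrix S S ℝ) : Prop :=
  (∃ i, Recurrent P i) ∧ ∀ i j, Recurrent P i → Recurrent P j → Accessible P i j

/-- The Doob lift of a `k`-th order transition matrix `Q` on `Z` to a first-order
stochastic matrix on `Z^k`. -/
def doobLift {Z : Type*} {k : ℕ} (Q : (Fin k → Z) → Z → ℝ) (hk : 0 < k) :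
    Matrix (Fin k → Z) (Fin k → Z) ℝ :=
  Matrix.of fun w w' =>
    if ∀ (i : Fin k) (h : (i : ℕ) + 1 < k), w' i = w ⟨(i : ℕ) + 1, h⟩ then
      Q w (w' ⟨k - 1, Nat.sub_lt hk Nat.one_pos⟩)
    else 0

/-- The distribution of a length-`m` block of the process `g(X)`, where `X` is a
stationary Markov chain with transition matrix `P` and (initial) invariant
distribution `π`:
`p_m(y₁,…,y_m) = ∑_{x₁ ∈ g⁻¹(y₁),…,x_m ∈ g⁻¹(y_m)} π(x₁) ∏_{ℓ=2}^m P(x_{ℓ-1}, x_ℓ)`. -/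
def wordDist {X Y : Type*} [Fintype X] (P : Matrix X X ℝ) (π : X → ℝ) (g : X → Y)
    {m : ℕ} (y : Fin m → Y) : ℝ :=
  ∑ x : Fin m → X,
    if ∀ i, g (x i) = y i then
      ∏ i : Fin m,
        if (i : ℕ) = 0 then π (x i)
        else P (x ⟨(i : ℕ) - 1, lt_of_le_of_lt (Nat.sub_le _ _) i.isLt⟩) (x i)
    else 0

/-!
The `k`-th order chain `Q` is the first-order chain `doobLift Q` on blocks in `Y^k`, whose
invariant distributions are its left fixed probability vectors. The block distribution `p_k` is
one of them: summing `p_{k+1}` over its last letter uses that `P` is stochastic, summing over its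
first letter that `π` is invariant.

A stochastic matrix with a state `s₀` reachable from every state has at most one invariant
distribution: by the maximum principle its harmonic functions are constant, so `M - 1`, and hence
`(M - 1)ᵀ`, has a one-dimensional kernel. For `doobLift Q` such a block exists. Outside the
support of `p_k` the chain `Q` is uniform, so every block reaches that support. A block in the
support is the image under `g` of a path of positive weight in `X`; continue this path to a state
`r` that every state reaches (single recurrent class), then along a fixed positive path from `r`.
Sliding a window along it moves `Q` with positive probability at each step and always ends at the
same block `s₀`.
-/

open Relation
open scoped Matrix

section Accessibility

variable {S : Type*} [Fintype S] {M : Matrix S S ℝ}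

theorem exists_pos_of_pow_succ_apply_pos (hM : ∀ i j, 0 ≤ M i j) {n : ℕ} {i j : S}
    (h : 0 < (M ^ (n + 1)) i j) : ∃ l, 0 < (M ^ n) i l ∧ 0 < M l j := by
  rw [pow_succ, Matrix.mul_apply, Finset.sum_pos_iff_of_nonneg fun l _ =>
    mul_nonneg (Matrix.pow_apply_nonneg hM n i l) (hM l j)] at h
  obtain ⟨l, -, hl⟩ := h
  exact ⟨l, pos_of_mul_pos_left hl (hM l j),
    pos_of_mul_pos_right hl (Matrix.pow_apply_nonneg hM n i l)⟩

theorem reflTransGen_of_pow_apply_pos (hM : ∀ i j, 0 ≤ M i j) {n : ℕ} {i j : S}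
    (h : 0 < (M ^ n) i j) : ReflTransGen (fun a b => 0 < M a b) i j := by
  induction n generalizing j with
  | zero =>
    obtain rfl : i = j := by
      by_contra hij
      simp [Matrix.one_apply_ne hij] at h
    exact .refl
  | succ n ih =>
    obtain ⟨l, hil, hlj⟩ := exists_pos_of_pow_succ_apply_pos hM h
    exact (ih hil).tail hlj

theorem accessible_iff_transGen (hM : ∀ i j, 0 ≤ M i j) {i j : S} :
    Accessible M i j ↔ TransGen (fun a b => 0 < M a b) i j := by
  constructor
  · rintro ⟨n, hn, h⟩
    obtain ⟨n, rfl⟩ := Nat.exists_eq_add_of_le' hn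
    obtain ⟨l, hil, hlj⟩ := exists_pos_of_pow_succ_apply_pos hM h
    exact .tail' (reflTransGen_of_pow_apply_pos hM hil) hlj
  · intro h
    induction h with
    | single hij => exact ⟨1, le_rfl, by simpa using hij⟩
    | @tail b c _ hbc ih =>
      obtain ⟨n, hn, hib⟩ := ih
      refine ⟨n + 1, by omega, ?_⟩
      rw [pow_succ, Matrix.mul_apply]
      exact (Finset.sum_pos_iff_of_nonneg fun l _ =>
        mul_nonneg (Matrix.pow_apply_nonneg hM n i l) (hM l c)).mpr
          ⟨b, Finset.mem_univ b, mul_pos hib hbc⟩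

/-- A state minimising the number of states reachable from it is recurrent. -/
theorem exists_reflTransGen_recurrent (hM : ∀ i j, 0 ≤ M i j) (i : S) :
    ∃ r, ReflTransGen (fun a b => 0 < M a b) i r ∧ Recurrent M r := by
  let reach (s : S) := Finset.univ.filter (ReflTransGen (fun a b => 0 < M a b) s)
  have mem_reach {s t : S} : t ∈ reach s ↔ ReflTransGen (fun a b => 0 < M a b) s t := by
    simp [reach]
  obtain ⟨r, hir, hmin⟩ := (reach i).exists_min_image (fun s => (reach s).card)
    ⟨i, mem_reach.mpr .refl⟩
  refine ⟨r, mem_reach.mp hir, fun j hrj => ?_⟩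
  rw [accessible_iff_transGen hM] at hrj ⊢
  have hsub : reach j ⊆ reach r := fun t ht =>
    mem_reach.mpr (hrj.to_reflTransGen.trans (mem_reach.mp ht))
  have hjr : r ∈ reach j := by
    rw [Finset.eq_of_subset_of_card_le hsub
      (hmin j (mem_reach.mpr ((mem_reach.mp hir).trans hrj.to_reflTransGen)))]
    exact mem_reach.mpr .refl
  rcases reflTransGen_iff_eq_or_transGen.mp (mem_reach.mp hjr) with rfl | h
  · exact hrj
  · exact h

theorem SingleRecurrentClass.exists_forall_reflTransGen (hM : ∀ i j, 0 ≤ M i j)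
    (h : SingleRecurrentClass M) : ∃ r, ∀ i, ReflTransGen (fun a b => 0 < M a b) i r := by
  obtain ⟨⟨r, hr⟩, hclass⟩ := h
  refine ⟨r, fun i => ?_⟩
  obtain ⟨r', hir', hr'⟩ := exists_reflTransGen_recurrent hM i
  exact hir'.trans ((accessible_iff_transGen hM).mp (hclass r' r hr' hr)).to_reflTransGen

theorem exists_seq_forall_pos (hM : ∀ i, ∑ j, M i j = 1) (r : S) :
    ∃ y : ℕ → S, y 0 = r ∧ ∀ t, 0 < M (y t) (y (t + 1)) := by
  have hrow (i : S) : ∃ j, 0 < M i j := by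
    obtain ⟨j, -, hj⟩ := Finset.exists_lt_of_sum_lt (s := Finset.univ) (f := fun _ => (0 : ℝ))
      (g := M i) (by simp [hM i])
    exact ⟨j, hj⟩
  choose next hnext using hrow
  exact ⟨fun t => next^[t] r, rfl, fun t => by
    simpa only [Function.iterate_succ_apply'] using hnext _⟩

end Accessibility

section Uniqueness

variable {S : Type*} [Fintype S] {M : Matrix S S ℝ}

theorem IsStochastic.apply_eq_of_isMax (hM : IsStochastic M) {h : S → ℝ}
    (hh : M *ᵥ h = h) {s t : S} (hmax : ∀ u, h u ≤ h s)
    (hst : ReflTransGen (fun a b => 0 < M a b) s t) : h t = h s := by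
  induction hst with
  | refl => rfl
  | @tail b c _ hbc ih =>
    have hsum : ∑ u, M b u * (h b - h u) = 0 := by
      have hb := congrFun hh b
      simp only [Matrix.mulVec, dotProduct] at hb
      simp only [mul_sub, Finset.sum_sub_distrib, ← Finset.sum_mul, hM.2, one_mul, hb, sub_self]
    have hterm := (Finset.sum_eq_zero_iff_of_nonneg fun u _ =>
      mul_nonneg (hM.1 b u) (by linarith [hmax u])).mp hsum c (Finset.mem_univ c)
    rcases mul_eq_zero.mp hterm with h0 | h0
    · exact absurd h0 hbc.ne'
    · linarith

theorem IsStochastic.apply_eq_of_mulVec_eq_self (hM : IsStochastic M) {s₀ : S}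
    (hs₀ : ∀ s, ReflTransGen (fun a b => 0 < M a b) s s₀) {h : S → ℝ}
    (hh : M *ᵥ h = h) (s : S) : h s = h s₀ := by
  obtain ⟨smax, -, hmax⟩ := Finset.exists_max_image Finset.univ h ⟨s, Finset.mem_univ s⟩
  obtain ⟨smin, -, hmin⟩ := Finset.exists_min_image Finset.univ h ⟨s, Finset.mem_univ s⟩
  have h1 := hM.apply_eq_of_isMax hh (fun u => hmax u (Finset.mem_univ u)) (hs₀ smax)
  have h2 := hM.apply_eq_of_isMax (h := -h) (by rw [Matrix.mulVec_neg, hh])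
    (fun u => neg_le_neg (hmin u (Finset.mem_univ u))) (hs₀ smin)
  simp only [Pi.neg_apply, neg_inj] at h2
  linarith [hmax s (Finset.mem_univ s), hmin s (Finset.mem_univ s)]

theorem IsStochastic.finrank_ker_transpose_le_one (hM : IsStochastic M) {s₀ : S}
    (hs₀ : ∀ s, ReflTransGen (fun a b => 0 < M a b) s s₀) :
    Module.finrank ℝ (LinearMap.ker (M - 1)ᵀ.mulVecLin) ≤ 1 := by
  have hker : LinearMap.ker (M - 1).mulVecLin ≤ Submodule.span ℝ {fun _ => 1} := by
    intro h hA
    have hh : M *ᵥ h = h := by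
      simpa [Matrix.sub_mulVec, sub_eq_zero] using hA
    refine Submodule.mem_span_singleton.mpr ⟨h s₀, funext fun s => ?_⟩
    simp [hM.apply_eq_of_mulVec_eq_self hs₀ hh s]
  have hspan : Module.finrank ℝ (Submodule.span ℝ {fun _ : S => (1 : ℝ)}) ≤ 1 := by
    simpa using finrank_span_le_card ({fun _ => 1} : Set (S → ℝ))
  have hrank := Matrix.rank_transpose (M - 1)
  unfold Matrix.rank at hrank
  have := LinearMap.finrank_range_add_finrank_ker (M - 1).mulVecLin
  have := LinearMap.finrank_range_add_finrank_ker (M - 1)ᵀ.mulVecLin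
  have := Submodule.finrank_mono hker
  omega

theorem IsStochastic.eq_of_vecMul_eq_self (hM : IsStochastic M) {s₀ : S}
    (hs₀ : ∀ s, ReflTransGen (fun a b => 0 < M a b) s s₀) {μ ν : S → ℝ}
    (hμ : μ ᵥ* M = μ) (hν : ν ᵥ* M = ν) (hμ1 : ∑ s, μ s = 1) (hν1 : ∑ s, ν s = 1) :
    μ = ν := by
  have hfix (ρ : S → ℝ) (hρ : ρ ᵥ* M = ρ) : ρ ∈ LinearMap.ker (M - 1)ᵀ.mulVecLin := by
    simp [hρ]
  obtain ⟨v, hv⟩ := finrank_le_one_iff.mp (hM.finrank_ker_transpose_le_one hs₀)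
  obtain ⟨a, ha⟩ := hv ⟨μ, hfix μ hμ⟩
  obtain ⟨b, hb⟩ := hv ⟨ν, hfix ν hν⟩
  have ha' : a • (v : S → ℝ) = μ := congrArg Subtype.val ha
  have hb' : b • (v : S → ℝ) = ν := congrArg Subtype.val hb
  have hsa : a * ∑ s, (v : S → ℝ) s = 1 := by rw [← hμ1, ← ha', Finset.mul_sum]; rfl
  have hsb : b * ∑ s, (v : S → ℝ) s = 1 := by rw [← hν1, ← hb', Finset.mul_sum]; rfl
  have hab : a = b :=
    mul_right_cancel₀ (right_ne_zero_of_mul_eq_one hsa) (hsa.trans hsb.symm)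
  rw [← ha', ← hb', hab]

end Uniqueness

theorem reflTransGen_of_forall_lt {α : Type*} {r : α → α → Prop} (f : ℕ → α) {T : ℕ}
    (h : ∀ t < T, r (f t) (f (t + 1))) : ReflTransGen r (f 0) (f T) :=
  (reflTransGen_of_succ_of_le (fun i j => r (f i) (f j)) (fun t ht => h t ht.2)
    (Nat.zero_le T)).lift f fun _ _ h => h

theorem sum_tuple_eq_sum_snoc {α β : Type*} [Fintype α] [AddCommMonoid β] {m : ℕ}
    (F : (Fin (m + 1) → α) → β) : ∑ v, F v = ∑ w : Fin m → α, ∑ a, F (Fin.snoc w a) := by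
  rw [Finset.sum_comm, ← (Fin.snocEquiv fun _ => α).sum_comp, Fintype.sum_prod_type]
  rfl

theorem sum_tuple_eq_sum_cons {α β : Type*} [Fintype α] [AddCommMonoid β] {m : ℕ}
    (F : (Fin (m + 1) → α) → β) : ∑ v, F v = ∑ a, ∑ w : Fin m → α, F (Fin.cons a w) := by
  rw [← (Fin.consEquiv fun _ => α).sum_comp, Fintype.sum_prod_type]
  rfl

def window {α : Type*} {k : ℕ} (z : ℕ → α) (t : ℕ) : Fin k → α :=
  fun i => z (t + i)

theorem tail_snoc_window {α : Type*} {k : ℕ} (z : ℕ → α) (t : ℕ) :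
    Fin.tail (Fin.snoc (window z t) (z (t + k)) : Fin (k + 1) → α) = window z (t + 1) := by
  funext i
  simp only [Fin.tail, Fin.snoc, window]
  split_ifs with h
  · simp only [cast_eq, Fin.val_castLT, Fin.val_succ]
    congr 1
    omega
  · simp only [cast_eq]
    congr 1
    simp only [Fin.val_succ, not_lt] at h
    omega

section HigherOrder

variable {Z : Type*} {n : ℕ}

theorem tail_snoc_eq_iff {w w' : Fin (n + 1) → Z} {z : Z} :
    Fin.tail (Fin.snoc w z : Fin (n + 2) → Z) = w' ↔
      (∀ (i : Fin (n + 1)) (h : (i : ℕ) + 1 < n + 1), w' i = w ⟨(i : ℕ) + 1, h⟩) ∧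
        w' (Fin.last n) = z := by
  simp only [funext_iff, Fin.tail, Fin.snoc]
  constructor
  · intro h
    refine ⟨fun i hi => ?_, ?_⟩
    · rw [← h i]; simp only [Fin.val_succ, hi, ↓reduceDIte, cast_eq]; rfl
    · rw [← h]; simp
  · rintro ⟨h, rfl⟩ i
    by_cases hi : (i : ℕ) + 1 < n + 1
    · simp only [Fin.val_succ, hi, ↓reduceDIte, cast_eq, h i hi]; rfl
    · have : i = Fin.last n := Fin.ext (by simp only [Fin.val_last]; omega)
      subst this; simp

variable (Q : (Fin (n + 1) → Z) → Z → ℝ) (hk : 0 < n + 1)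

theorem doobLift_tail_snoc (w : Fin (n + 1) → Z) (z : Z) :
    doobLift Q hk w (Fin.tail (Fin.snoc w z : Fin (n + 2) → Z)) = Q w z := by
  obtain ⟨h, hlast⟩ := tail_snoc_eq_iff.mp (rfl : Fin.tail (Fin.snoc w z : Fin (n + 2) → Z) = _)
  simp only [doobLift, Matrix.of_apply, if_pos h]
  exact congrArg (Q w) hlast

theorem reflTransGen_doobLift_window (y : ℕ → Z) {T : ℕ}
    (h : ∀ t < T, 0 < Q (window y t) (y (t + (n + 1)))) :
    ReflTransGen (fun w w' => 0 < doobLift Q hk w w') (window y 0) (window y T) :=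
  reflTransGen_of_forall_lt (window y) fun t ht => by
    rw [← tail_snoc_window, doobLift_tail_snoc]
    exact h t ht

variable [Fintype Z]

theorem doobLift_apply (w w' : Fin (n + 1) → Z) :
    doobLift Q hk w w' =
      ∑ z, if Fin.tail (Fin.snoc w z : Fin (n + 2) → Z) = w' then Q w z else 0 := by
  simp only [doobLift, Matrix.of_apply, tail_snoc_eq_iff, ite_and]
  split_ifs
  · simp only [eq_comm, Finset.sum_ite_eq', Finset.mem_univ, ↓reduceIte]; rfl
  · simp only [Finset.sum_const_zero]

theorem vecMul_doobLift (μ : (Fin (n + 1) → Z) → ℝ) (w' : Fin (n + 1) → Z) :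
    (μ ᵥ* doobLift Q hk) w' =
      ∑ z₀, μ (front (Fin.cons z₀ w')) *
        Q (front (Fin.cons z₀ w')) ((Fin.cons z₀ w' : Fin (n + 2) → Z) (Fin.last (n + 1))) := by
  have h : (μ ᵥ* doobLift Q hk) w' = ∑ v : Fin (n + 2) → Z,
      if Fin.tail v = w' then μ (Fin.init v) * Q (Fin.init v) (v (Fin.last (n + 1))) else 0 := by
    simp only [Matrix.vecMul, dotProduct, doobLift_apply, Finset.mul_sum, mul_ite, mul_zero]
    rw [sum_tuple_eq_sum_snoc (m := n + 1)]
    simp [Fin.init_snoc]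
  rw [h, sum_tuple_eq_sum_cons]
  simp only [Fin.tail_cons, Fin.cons_last, Finset.sum_ite_eq', Finset.mem_univ, ↓reduceIte]
  rfl

variable {Q}

theorem IsTransMat.isStochastic_doobLift (hQ : IsTransMat Q) :
    IsStochastic (doobLift Q hk) := by
  refine ⟨fun w w' => ?_, fun w => ?_⟩
  · rw [doobLift_apply]
    exact Finset.sum_nonneg fun z _ => by split_ifs <;> simp [hQ.1]
  · simp only [doobLift_apply]
    rw [Finset.sum_comm]
    simp [hQ.2]

theorem isInvariantFor_iff {μ : (Fin (n + 1) → Z) → ℝ} :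
    IsInvariantFor μ Q ↔ IsProbDist μ ∧ μ ᵥ* doobLift Q hk = μ := by
  rw [IsInvariantFor, funext_iff]
  simp only [vecMul_doobLift, eq_comm]

end HigherOrder

section PathWeight

variable {X : Type*} {P : Matrix X X ℝ} {π : X → ℝ} {m : ℕ}

variable (P π) in
def pathWeight (x : Fin (m + 1) → X) : ℝ :=
  π (x 0) * ∏ i : Fin m, P (x i.castSucc) (x i.succ)

theorem pathWeight_nonneg (hP : ∀ i j, 0 ≤ P i j) (hπ : ∀ x, 0 ≤ π x) (x : Fin (m + 1) → X) :
    0 ≤ pathWeight P π x :=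
  mul_nonneg (hπ _) (Finset.prod_nonneg fun _ _ => hP _ _)

theorem pathWeight_snoc (x : Fin (m + 1) → X) (a : X) :
    pathWeight P π (Fin.snoc x a : Fin (m + 2) → X) = pathWeight P π x * P (x (Fin.last m)) a := by
  simp only [pathWeight, Fin.prod_univ_castSucc, Fin.snoc_castSucc, Fin.succ_castSucc,
    Fin.succ_last, Fin.snoc_last, mul_assoc]
  rfl

variable [Fintype X]

theorem sum_pathWeight_snoc (hP : ∀ i, ∑ j, P i j = 1) (x : Fin (m + 1) → X) :
    ∑ a, pathWeight P π (Fin.snoc x a : Fin (m + 2) → X) = pathWeight P π x := by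
  simp [pathWeight_snoc, ← Finset.mul_sum, hP]

theorem sum_pathWeight_cons (hπ : ∀ j, ∑ i, π i * P i j = π j) (x : Fin (m + 1) → X) :
    ∑ s, pathWeight P π (Fin.cons s x : Fin (m + 2) → X) = pathWeight P π x := by
  simp only [pathWeight, Fin.prod_univ_succ (n := m), Fin.cons_zero, Fin.cons_succ,
    Fin.castSucc_zero, ← Fin.succ_castSucc, ← mul_assoc, ← Finset.sum_mul, hπ]

theorem pathWeight_le_tail (hP : ∀ i j, 0 ≤ P i j) (hπ : ∀ x, 0 ≤ π x)
    (hπinv : ∀ j, ∑ i, π i * P i j = π j) (x : Fin (m + 2) → X) :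
    pathWeight P π x ≤ pathWeight P π (Fin.tail x) := by
  have hstep : π (x 0) * P (x 0) (x 1) ≤ π (x 1) := by
    rw [← hπinv (x 1)]
    exact Finset.single_le_sum (f := fun i => π i * P i (x 1))
      (fun i _ => mul_nonneg (hπ i) (hP i _)) (Finset.mem_univ _)
  simp only [pathWeight, Fin.prod_univ_succ (n := m), Fin.tail, ← mul_assoc, Fin.succ_castSucc]
  exact mul_le_mul_of_nonneg_right hstep (Finset.prod_nonneg fun _ _ => hP _ _)

theorem sum_pathWeight (hP : ∀ i, ∑ j, P i j = 1) (hπ : ∑ x, π x = 1) :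
    ∑ x : Fin (m + 1) → X, pathWeight P π x = 1 := by
  induction m with
  | zero => simpa [sum_tuple_eq_sum_cons, pathWeight] using hπ
  | succ m ih => rw [sum_tuple_eq_sum_snoc, ← ih]; simp [sum_pathWeight_snoc hP]

end PathWeight

section WordDist

variable {X Y : Type*} [Fintype X] {P : Matrix X X ℝ} {π : X → ℝ} {g : X → Y} {m : ℕ}

theorem wordDist_eq_sum (y : Fin (m + 1) → Y) :
    wordDist P π g y = ∑ x, if g ∘ x = y then pathWeight P π x else 0 := by
  refine Finset.sum_congr rfl fun x _ => ?_
  simp only [funext_iff, Function.comp_apply]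
  congr 1
  rw [pathWeight, Fin.prod_univ_succ]
  refine congrArg₂ (· * ·) (by simp) (Finset.prod_congr rfl fun i _ => ?_)
  simp only [Fin.val_succ, Nat.add_eq_zero_iff, one_ne_zero, and_false, ↓reduceIte,
    add_tsub_cancel_right]
  rfl

theorem wordDist_pos_iff (hP : ∀ i j, 0 ≤ P i j) (hπ : ∀ x, 0 ≤ π x) {y : Fin (m + 1) → Y} :
    0 < wordDist P π g y ↔ ∃ x, g ∘ x = y ∧ 0 < pathWeight P π x := by
  rw [wordDist_eq_sum, Finset.sum_pos_iff_of_nonneg fun x _ => by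
    split_ifs <;> simp [pathWeight_nonneg hP hπ]]
  exact exists_congr fun x => by split_ifs with h <;> simp [h]

theorem wordDist_nonneg (hP : ∀ i j, 0 ≤ P i j) (hπ : ∀ x, 0 ≤ π x) (y : Fin (m + 1) → Y) :
    0 ≤ wordDist P π g y := by
  rw [wordDist_eq_sum]
  exact Finset.sum_nonneg fun x _ => by split_ifs <;> simp [pathWeight_nonneg hP hπ]

variable [Fintype Y]

theorem sum_wordDist_snoc (hP : ∀ i, ∑ j, P i j = 1) (w : Fin (m + 1) → Y) :
    ∑ z, wordDist P π g (Fin.snoc w z : Fin (m + 2) → Y) = wordDist P π g w := by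
  simp only [wordDist_eq_sum]
  rw [Finset.sum_comm, sum_tuple_eq_sum_snoc (m := m + 1)]
  simp [Fin.comp_snoc, Fin.snoc_injective2.eq_iff, ite_and, sum_pathWeight_snoc hP]

theorem sum_wordDist_cons (hπ : ∀ j, ∑ i, π i * P i j = π j) (w : Fin (m + 1) → Y) :
    ∑ z, wordDist P π g (Fin.cons z w : Fin (m + 2) → Y) = wordDist P π g w := by
  simp only [wordDist_eq_sum]
  rw [Finset.sum_comm, sum_tuple_eq_sum_cons (m := m + 1), Finset.sum_comm]
  simp [Fin.comp_cons, Fin.cons_injective2.eq_iff, ite_and, sum_pathWeight_cons hπ]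

theorem sum_wordDist (hP : ∀ i, ∑ j, P i j = 1) (hπ : ∑ x, π x = 1) :
    ∑ w : Fin (m + 1) → Y, wordDist P π g w = 1 := by
  simp only [wordDist_eq_sum]
  rw [Finset.sum_comm]
  simp [sum_pathWeight hP hπ]

end WordDist

section MarkovApprox

variable {X Y : Type*} [Fintype X] [Fintype Y] {P : Matrix X X ℝ} {π : X → ℝ} {g : X → Y}
  {n : ℕ}

variable (P π g) in
def markovApprox {k : ℕ} (w : Fin k → Y) (z : Y) : ℝ :=
  if 0 < wordDist P π g w then wordDist P π g (Fin.snoc w z) / wordDist P π g w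
  else 1 / (Fintype.card Y : ℝ)

theorem markovApprox_pos {k : ℕ} {w : Fin k → Y} {z : Y}
    (h : 0 < wordDist P π g w → 0 < wordDist P π g (Fin.snoc w z : Fin (k + 1) → Y)) :
    0 < markovApprox P π g w z := by
  have : 0 < Fintype.card Y := Fintype.card_pos_iff.mpr ⟨z⟩
  unfold markovApprox
  split_ifs with hw
  · exact div_pos (h hw) hw
  · positivity

theorem isTransMat_markovApprox (hP : IsStochastic P) (hπ : ∀ x, 0 ≤ π x) :
    IsTransMat (markovApprox P π g : (Fin (n + 1) → Y) → Y → ℝ) := by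
  refine ⟨fun w z => ?_, fun w => ?_⟩
  · unfold markovApprox
    split_ifs with hw
    · exact div_nonneg (wordDist_nonneg hP.1 hπ _) hw.le
    · positivity
  · have : Nonempty Y := ⟨w 0⟩
    unfold markovApprox
    split_ifs with hw
    · rw [← Finset.sum_div, sum_wordDist_snoc hP.2, div_self hw.ne']
    · simp [Finset.card_univ]

theorem wordDist_front_mul_markovApprox (hP : IsStochastic P) (hπ : ∀ x, 0 ≤ π x)
    (v : Fin (n + 2) → Y) :
    wordDist P π g (front v) * markovApprox P π g (front v) (v (Fin.last (n + 1))) =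
      wordDist P π g v := by
  have hsnoc : Fin.snoc (front v) (v (Fin.last (n + 1))) = v := Fin.snoc_init_self v
  by_cases hpos : 0 < wordDist P π g (front v)
  · rw [markovApprox, if_pos hpos, mul_div_cancel₀ _ hpos.ne', hsnoc]
  · have hzero : wordDist P π g (front v) = 0 :=
      le_antisymm (not_lt.mp hpos) (wordDist_nonneg hP.1 hπ _)
    have hle : wordDist P π g v ≤ wordDist P π g (front v) :=
      calc wordDist P π g v = wordDist P π g (Fin.snoc (front v) (v (Fin.last (n + 1)))) := by
            rw [hsnoc]
        _ ≤ ∑ z, wordDist P π g (Fin.snoc (front v) z : Fin (n + 2) → Y) :=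
            Finset.single_le_sum (fun z _ => wordDist_nonneg hP.1 hπ _) (Finset.mem_univ _)
        _ = wordDist P π g (front v) := sum_wordDist_snoc hP.2 _
    rw [hzero, zero_mul]
    linarith [wordDist_nonneg (g := g) hP.1 hπ v]

theorem isInvariantFor_wordDist (hP : IsStochastic P) (hπ : IsProbDist π)
    (hπinv : ∀ j, ∑ i, π i * P i j = π j) :
    IsInvariantFor (fun w : Fin (n + 1) → Y => wordDist P π g w) (markovApprox P π g) :=
  ⟨⟨wordDist_nonneg hP.1 hπ.1, sum_wordDist hP.2 hπ.2⟩, fun w => by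
    simp only [wordDist_front_mul_markovApprox hP hπ.1, sum_wordDist_cons hπinv]⟩

end MarkovApprox

section Reachability

variable {X Y : Type*} {P : Matrix X X ℝ} {π : X → ℝ} {g : X → Y} {n : ℕ}

variable (P) in
def blockStep (x x' : Fin (n + 1) → X) : Prop :=
  ∃ a, 0 < P (x (Fin.last n)) a ∧ Fin.tail (Fin.snoc x a : Fin (n + 2) → X) = x'

theorem exists_reflTransGen_blockStep {x : Fin (n + 1) → X} {b : X}
    (h : ReflTransGen (fun a b => 0 < P a b) (x (Fin.last n)) b) :
    ∃ x', x' (Fin.last n) = b ∧ ReflTransGen (blockStep P) x x' := by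
  induction h with
  | refl => exact ⟨x, rfl, .refl⟩
  | @tail b c _ hbc ih =>
    obtain ⟨x', hx'b, hxx'⟩ := ih
    refine ⟨Fin.tail (Fin.snoc x' c : Fin (n + 2) → X), ?_, hxx'.tail ⟨c, hx'b ▸ hbc, rfl⟩⟩
    rw [Fin.tail, Fin.succ_last, Fin.snoc_last]

theorem reflTransGen_blockStep_window (x : Fin (n + 1) → X) {y : ℕ → X}
    (hy₀ : y 0 = x (Fin.last n)) (hy : ∀ t, 0 < P (y t) (y (t + 1))) :
    ReflTransGen (blockStep P) x (window y 0) := by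
  let z : ℕ → X := fun t => if h : t < n then x ⟨t, by omega⟩ else y (t - n)
  have hzy (t : ℕ) : z (t + n) = y t := by simp [z]
  have hzx : window z 0 = x := by
    funext i
    by_cases hi : (i : ℕ) < n
    · simp [z, window, hi]
    · obtain rfl : i = Fin.last n := Fin.ext (by simp only [Fin.val_last]; omega)
      simp [z, window, hy₀]
  have hzy0 : window z n = (window y 0 : Fin (n + 1) → X) := by
    funext i
    simp only [window, add_comm n, hzy, zero_add]
  rw [← hzx, ← hzy0]
  refine reflTransGen_of_forall_lt (window z) fun t _ => ⟨z (t + 1 + n), ?_, ?_⟩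
  · simpa [window, hzy, add_right_comm t n 1] using hy t
  · simpa [add_right_comm t 1 n, add_assoc] using tail_snoc_window z t

variable [Fintype X] [Fintype Y] (hk : 0 < n + 1)

theorem exists_reflTransGen_doobLift_wordDist_pos (hP : ∀ i, ∑ j, P i j = 1)
    (hπ : ∑ x, π x = 1) (s : Fin (n + 1) → Y) :
    ∃ v, 0 < wordDist P π g v ∧
      ReflTransGen (fun w w' => 0 < doobLift (markovApprox P π g) hk w w') s v := by
  obtain ⟨u, -, hu⟩ := Finset.exists_lt_of_sum_lt (s := Finset.univ) (f := fun _ => (0 : ℝ))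
    (g := fun w : Fin (n + 1) → Y => wordDist P π g w) (by simp [sum_wordDist hP hπ])
  let y : ℕ → Y := fun t =>
    if h : t < n + 1 then s ⟨t, h⟩ else u ⟨(t - (n + 1)) % (n + 1), Nat.mod_lt _ hk⟩
  have hys : window y 0 = s := funext fun i => by simp [y, window, i.is_le]
  have hyu : window y (n + 1) = u := funext fun i => by
    simp [y, window, Nat.mod_eq_of_lt i.isLt, show ¬n + 1 + (i : ℕ) ≤ n by omega]
  have hex : ∃ t, 0 < wordDist P π g (window y t : Fin (n + 1) → Y) := ⟨n + 1, hyu ▸ hu⟩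
  -- Until the window first meets the support of `p`, `Q` is uniform, hence positive.
  refine ⟨window y (Nat.find hex), Nat.find_spec hex, hys ▸ reflTransGen_doobLift_window _ hk y
    fun t ht => markovApprox_pos fun h => absurd h (Nat.find_min hex ht)⟩

theorem pathWeight_pos_and_doobLift_pos_of_blockStep (hP : ∀ i j, 0 ≤ P i j) (hπ : ∀ x, 0 ≤ π x)
    (hπinv : ∀ j, ∑ i, π i * P i j = π j) {x x' : Fin (n + 1) → X}
    (hx : 0 < pathWeight P π x) (hxx' : blockStep P x x') :
    0 < pathWeight P π x' ∧ 0 < doobLift (markovApprox P π g) hk (g ∘ x) (g ∘ x') := by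
  obtain ⟨a, ha, rfl⟩ := hxx'
  have hsnoc : 0 < pathWeight P π (Fin.snoc x a : Fin (n + 2) → X) := by
    rw [pathWeight_snoc]
    exact mul_pos hx ha
  refine ⟨hsnoc.trans_le (pathWeight_le_tail hP hπ hπinv _), ?_⟩
  rw [Fin.comp_tail, Fin.comp_snoc, doobLift_tail_snoc]
  exact markovApprox_pos fun _ =>
    (wordDist_pos_iff hP hπ).mpr ⟨Fin.snoc x a, Fin.comp_snoc _ _ _, hsnoc⟩

theorem reflTransGen_doobLift_of_blockStep (hP : ∀ i j, 0 ≤ P i j) (hπ : ∀ x, 0 ≤ π x)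
    (hπinv : ∀ j, ∑ i, π i * P i j = π j) {x x' : Fin (n + 1) → X}
    (hx : 0 < pathWeight P π x) (h : ReflTransGen (blockStep P) x x') :
    ReflTransGen (fun w w' => 0 < doobLift (markovApprox P π g) hk w w') (g ∘ x) (g ∘ x') := by
  suffices 0 < pathWeight P π x' ∧
      ReflTransGen (fun w w' => 0 < doobLift (markovApprox P π g) hk w w') (g ∘ x) (g ∘ x') from
    this.2
  induction h with
  | refl => exact ⟨hx, .refl⟩
  | tail _ hstep ih =>
    obtain ⟨hpos, hreach⟩ := ih
    obtain ⟨hpos', hlift⟩ :=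
      pathWeight_pos_and_doobLift_pos_of_blockStep (g := g) hk hP hπ hπinv hpos hstep
    exact ⟨hpos', hreach.tail hlift⟩

theorem exists_forall_reflTransGen_doobLift (hP : IsStochastic P) (hrec : SingleRecurrentClass P)
    (hπ : IsProbDist π) (hπinv : ∀ j, ∑ i, π i * P i j = π j) :
    ∃ s₀ : Fin (n + 1) → Y, ∀ s,
      ReflTransGen (fun w w' => 0 < doobLift (markovApprox P π g) hk w w') s s₀ := by
  obtain ⟨r, hr⟩ := hrec.exists_forall_reflTransGen hP.1
  obtain ⟨y, hy₀, hy⟩ := exists_seq_forall_pos hP.2 r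
  refine ⟨g ∘ window y 0, fun s => ?_⟩
  obtain ⟨v, hv, hsv⟩ := exists_reflTransGen_doobLift_wordDist_pos hk hP.2 hπ.2 s
  obtain ⟨x, rfl, hx⟩ := (wordDist_pos_iff hP.1 hπ.1).mp hv
  obtain ⟨x', hx'r, hxx'⟩ := exists_reflTransGen_blockStep (hr (x (Fin.last n)))
  exact hsv.trans (reflTransGen_doobLift_of_blockStep hk hP.1 hπ.1 hπinv hx
    (hxx'.trans (reflTransGen_blockStep_window x' (hy₀.trans hx'r.symm) hy)))

end Reachability

theorem unique_invariant_of_lumping_general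
    {X Y : Type*} [Fintype X] [Fintype Y]
    (P : Matrix X X ℝ) (hP : IsStochastic P) (hrec : SingleRecurrentClass P)
    (π : X → ℝ) (hπ : IsProbDist π) (hπinv : ∀ j, ∑ i, π i * P i j = π j)
    (g : X → Y)
    (k : ℕ) (hk : 1 ≤ k)
    (Q : (Fin k → Y) → Y → ℝ)
    (hQ : ∀ (w : Fin k → Y) (z : Y), Q w z =
      if 0 < wordDist P π g w then wordDist P π g (Fin.snoc w z) / wordDist P π g w
      else 1 / (Fintype.card Y : ℝ)) :
    (∃! μ : (Fin k → Y) → ℝ, IsInvariantFor μ Q) ∧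
      ∀ μ : (Fin k → Y) → ℝ, IsInvariantFor μ Q → μ = fun w => wordDist P π g w := by
  obtain ⟨n, rfl⟩ : ∃ n, k = n + 1 := ⟨k - 1, by omega⟩
  obtain rfl : Q = markovApprox P π g := funext fun w => funext (hQ w)
  have hM := (isTransMat_markovApprox (g := g) hP hπ.1).isStochastic_doobLift hk
  obtain ⟨s₀, hs₀⟩ := exists_forall_reflTransGen_doobLift (g := g) hk hP hrec hπ hπinv
  have hp : IsInvariantFor (fun w : Fin (n + 1) → Y => wordDist P π g w) (markovApprox P π g) :=
    isInvariantFor_wordDist hP hπ hπinv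
  have huniq (μ) (hμ : IsInvariantFor μ (markovApprox P π g)) : μ = fun w => wordDist P π g w :=
    hM.eq_of_vecMul_eq_self hs₀ ((isInvariantFor_iff hk).mp hμ).2
      ((isInvariantFor_iff hk).mp hp).2 hμ.1.2 hp.1.2
  exact ⟨⟨_, hp, huniq⟩, huniq⟩

/-- If `X` is a stationary Markov chain with a single recurrent class and
invariant distribution `π`, `g : X → Y`, and `Q` is the `k`-th order Markov approximation of
the lumped process `Y = g(X)`, then `Q` has a unique invariant distribution on `Y^k`,
namely the `k`-block distribution `p_k` of `g(X)`. -/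
theorem unique_invariant_of_lumping
    {X Y : Type*} [Fintype X] [Fintype Y]
    (P : Matrix X X ℝ) (hP : IsStochastic P) (hrec : SingleRecurrentClass P)
    (π : X → ℝ) (hπ : IsProbDist π) (hπinv : ∀ j, ∑ i, π i * P i j = π j)
    (hY : 1 < Fintype.card Y) (g : X → Y)
    (k : ℕ) (hk : 1 ≤ k)
    (Q : (Fin k → Y) → Y → ℝ)
    (hQ : ∀ (w : Fin k → Y) (z : Y), Q w z =
      if 0 < wordDist P π g w then wordDist P π g (Fin.snoc w z) / wordDist P π g w
      else 1 / (Fintype.card Y : ℝ)) :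
    (∃! μ : (Fin k → Y) → ℝ, IsInvariantFor μ Q) ∧
      ∀ μ : (Fin k → Y) → ℝ, IsInvariantFor μ Q → μ = fun w => wordDist P π g w :=
  unique_invariant_of_lumping_general P hP hrec π hπ hπinv g k hk Q hQ
end
end

section
/- Let X be a finite set, P a stochastic matrix on X (entries ≥ 0, rows summing to 1) with a single recurrent class, and π an invariant distribution of P. Let Y be a finite set with |Y| > 1 and g : X → Y any map. For n ≥ 1 define p_n on Y^n by p_n(y_1,…,y_n) = Σ_{x_1 ∈ g^{-1}(y_1), …, x_n ∈ g^{-1}(y_n)} π(x_1) ∏_{ℓ=2}^{n} P(x_{ℓ-1}, x_ℓ). Fix k ≥ 1, let Q(w,z) = p_{k+1}(w,z)/p_k(w) if p_k(w) > 0 and Q(w,z) = 1/|Y| otherwise, let P_Q be the Doob lift of Q on Y^k, and let S = {w ∈ Y^k : p_k(w) > 0}. Then all states of S communicate under P_Q: for every w, w' ∈ S there exists n ≥ 1 such that ((P_Q)^n)(w, w') > 0. -/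
open Finset
open scoped Classical

noncomputable section

section AuxMat
variable {S : Type*} [Fintype S] [DecidableEq S]

lemma aux_pow_nonneg (M : Matrix S S ℝ) (hM : ∀ i j, 0 ≤ M i j) (n : ℕ) :
    ∀ i j, 0 ≤ (M ^ n) i j := by
  induction n with
  | zero => intro i j; rw [pow_zero, Matrix.one_apply]; split <;> norm_num
  | succ n ih =>
    intro i j
    rw [pow_succ, Matrix.mul_apply]
    exact Finset.sum_nonneg fun c _ => mul_nonneg (ih i c) (hM c j)

lemma aux_pow_entry_ge_prod (M : Matrix S S ℝ) (hM : ∀ i j, 0 ≤ M i j) (f : ℕ → S) :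
    ∀ n, ∏ j ∈ Finset.range n, M (f j) (f (j + 1)) ≤ (M ^ n) (f 0) (f n) := by
  intro n
  induction n with
  | zero => simp [Matrix.one_apply]
  | succ n ih =>
    rw [Finset.prod_range_succ, pow_succ, Matrix.mul_apply]
    calc (∏ j ∈ Finset.range n, M (f j) (f (j + 1))) * M (f n) (f (n + 1))
        ≤ (M ^ n) (f 0) (f n) * M (f n) (f (n + 1)) :=
          mul_le_mul_of_nonneg_right ih (hM _ _)
      _ ≤ ∑ c, (M ^ n) (f 0) c * M c (f (n + 1)) :=
          Finset.single_le_sum (f := fun c => (M ^ n) (f 0) c * M c (f (n + 1)))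
            (fun c _ => mul_nonneg (aux_pow_nonneg M hM n _ _) (hM _ _)) (Finset.mem_univ _)

end AuxMat

section AuxMat2
variable {S : Type*} [Fintype S]

lemma aux_exists_path (M : Matrix S S ℝ) (hM : ∀ i j, 0 ≤ M i j) :
    ∀ (n : ℕ) (i j : S), 0 < (M ^ n) i j →
      ∃ c : ℕ → S, c 0 = i ∧ c n = j ∧ ∀ t < n, 0 < M (c t) (c (t + 1)) := by
  intro n
  induction n with
  | zero =>
    intro i j h
    rw [pow_zero, Matrix.one_apply] at h
    refine ⟨fun _ => i, rfl, ?_, by omega⟩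
    by_contra hij
    rw [if_neg hij] at h
    exact lt_irrefl _ h
  | succ n ih =>
    intro i j h
    rw [pow_succ, Matrix.mul_apply] at h
    obtain ⟨c, -, hc⟩ := Finset.exists_lt_of_sum_lt (f := fun _ => (0:ℝ)) (by simpa using h)
    have h1 : 0 < (M ^ n) i c := by
      rcases lt_or_eq_of_le (aux_pow_nonneg M hM n i c) with h' | h'
      · exact h'
      · rw [← h'] at hc; simp at hc
    have h2 : 0 < M c j := by
      rcases lt_or_eq_of_le (hM c j) with h' | h'
      · exact h'
      · rw [← h'] at hc; simp at hc
    obtain ⟨p, hp0, hpn, hps⟩ := ih i c h1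
    refine ⟨fun t => if t ≤ n then p t else j, by simpa using hp0, by simp, ?_⟩
    intro t ht
    rcases Nat.lt_or_ge t n with h' | h'
    · simpa [Nat.le_of_lt h', Nat.succ_le_of_lt h'] using hps t h'
    · have : t = n := by omega
      subst this
      simpa [hpn] using h2

lemma aux_accessible_of_step (M : Matrix S S ℝ) (hM : ∀ i j, 0 ≤ M i j)
    {m i x : S} (h1 : 0 < M m i) (h2 : i = x ∨ Accessible M i x) : Accessible M m x := by
  rcases h2 with rfl | ⟨n, hn1, hn⟩
  · exact ⟨1, le_refl _, by simpa [pow_one] using h1⟩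
  · refine ⟨n + 1, by omega, ?_⟩
    rw [pow_succ', Matrix.mul_apply]
    calc (0:ℝ) < M m i * (M ^ n) i x := mul_pos h1 hn
      _ ≤ ∑ c, M m c * (M ^ n) c x :=
        Finset.single_le_sum (f := fun c => M m c * (M ^ n) c x)
          (fun c _ => mul_nonneg (hM _ _) (aux_pow_nonneg M hM n _ _)) (Finset.mem_univ _)

end AuxMat2

lemma aux_recurrent_of_pi_pos {X : Type*} [Fintype X] (P : Matrix X X ℝ)
    (hP : IsStochastic P) (π : X → ℝ) (hπnn : ∀ i, 0 ≤ π i)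
    (hπinv : ∀ j, ∑ i, π i * P i j = π j) {x : X} (hx : 0 < π x) : Recurrent P x := by
  obtain ⟨hPnn, hProw⟩ := hP
  set T : Finset X := Finset.univ.filter (fun i => i = x ∨ Accessible P i x) with hT
  have hmemT : ∀ i, i ∈ T ↔ (i = x ∨ Accessible P i x) := by
    intro i; simp [hT]
  have hTc_zero : ∀ m, m ∉ T → ∀ i ∈ T, P m i = 0 := by
    intro m hm i hi
    by_contra h
    have hpos : 0 < P m i := lt_of_le_of_ne (hPnn m i) (Ne.symm h)
    exact hm ((hmemT m).2 (Or.inr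
      (aux_accessible_of_step P hPnn hpos ((hmemT i).1 hi))))
  -- flow balance
  have hrow : ∀ m, m ∉ T → ∑ i ∈ Tᶜ, P m i = 1 := by
    intro m hm
    have h1 : ∑ i ∈ T, P m i = 0 := Finset.sum_eq_zero (hTc_zero m hm)
    have h2 : ∑ i ∈ T, P m i + ∑ i ∈ Tᶜ, P m i = 1 := by
      rw [Finset.sum_add_sum_compl]; exact hProw m
    linarith
  have hflow : ∑ m ∈ T, (π m * ∑ i ∈ Tᶜ, P m i) = 0 := by
    have e1 : ∑ i ∈ Tᶜ, π i = ∑ m, (π m * ∑ i ∈ Tᶜ, P m i) := by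
      calc ∑ i ∈ Tᶜ, π i = ∑ i ∈ Tᶜ, ∑ m, π m * P m i := by
            exact Finset.sum_congr rfl fun i _ => (hπinv i).symm
        _ = ∑ m, ∑ i ∈ Tᶜ, π m * P m i := Finset.sum_comm
        _ = ∑ m, (π m * ∑ i ∈ Tᶜ, P m i) := by
            exact Finset.sum_congr rfl fun m _ => (Finset.mul_sum _ _ _).symm
    have e2 : ∑ m, (π m * ∑ i ∈ Tᶜ, P m i)
        = ∑ m ∈ T, (π m * ∑ i ∈ Tᶜ, P m i) + ∑ m ∈ Tᶜ, (π m * ∑ i ∈ Tᶜ, P m i) :=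
      (Finset.sum_add_sum_compl T _).symm
    have e3 : ∑ m ∈ Tᶜ, (π m * ∑ i ∈ Tᶜ, P m i) = ∑ m ∈ Tᶜ, π m := by
      refine Finset.sum_congr rfl fun m hm => ?_
      rw [hrow m (Finset.mem_compl.1 hm), mul_one]
    linarith [e1.trans e2]
  have key : ∀ m ∈ T, 0 < π m → ∀ i, 0 < P m i → i ∈ T := by
    intro m hm hπm i hPi
    have hnn : ∀ m' ∈ T, 0 ≤ π m' * ∑ i ∈ Tᶜ, P m' i := fun m' _ =>
      mul_nonneg (hπnn m') (Finset.sum_nonneg fun i _ => hPnn m' i)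
    have hz := (Finset.sum_eq_zero_iff_of_nonneg hnn).1 hflow m hm
    by_contra hi
    have hiTc : i ∈ Tᶜ := Finset.mem_compl.2 hi
    have : 0 < π m * ∑ j ∈ Tᶜ, P m j :=
      mul_pos hπm (lt_of_lt_of_le hPi
        (Finset.single_le_sum (fun j _ => hPnn m j) hiTc))
    linarith
  -- conclude
  intro j ⟨n, hn1, hn⟩
  obtain ⟨c, hc0, hcn, hcs⟩ := aux_exists_path P hPnn n x j hn
  have hprop : ∀ t ≤ n, c t ∈ T ∧ 0 < π (c t) := by
    intro t
    induction t with
    | zero =>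
      intro _
      rw [hc0]
      exact ⟨(hmemT x).2 (Or.inl rfl), hx⟩
    | succ t ih =>
      intro ht
      obtain ⟨hmem, hpos⟩ := ih (by omega)
      have hstep := hcs t (by omega)
      have hπnext : 0 < π (c (t + 1)) := by
        calc (0:ℝ) < π (c t) * P (c t) (c (t + 1)) := mul_pos hpos hstep
          _ ≤ ∑ i, π i * P i (c (t + 1)) :=
            Finset.single_le_sum (f := fun i => π i * P i (c (t + 1)))
              (fun i _ => mul_nonneg (hπnn i) (hPnn i _)) (Finset.mem_univ _)
          _ = π (c (t + 1)) := hπinv _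
      exact ⟨key (c t) hmem hpos (c (t + 1)) hstep, hπnext⟩
  have hjT : j ∈ T := hcn ▸ (hprop n le_rfl).1
  rcases (hmemT j).1 hjT with h | h
  · subst h; exact ⟨n, hn1, hn⟩
  · exact h

section AuxWord
variable {X Y : Type*} [Fintype X] [Fintype Y]

lemma aux_wordDist_nonneg (P : Matrix X X ℝ) (hPnn : ∀ i j, 0 ≤ P i j)
    (π : X → ℝ) (hπnn : ∀ i, 0 ≤ π i) (g : X → Y) {m : ℕ} (y : Fin m → Y) :
    0 ≤ wordDist P π g y := by
  refine Finset.sum_nonneg fun xs _ => ?_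
  split
  · exact Finset.prod_nonneg fun i _ => by split <;> [exact hπnn _; exact hPnn _ _]
  · exact le_rfl

lemma aux_wordDist_pos_of_path (P : Matrix X X ℝ) (hPnn : ∀ i j, 0 ≤ P i j)
    (π : X → ℝ) (hπnn : ∀ i, 0 ≤ π i) (g : X → Y) {m : ℕ} (x : ℕ → X) (j : ℕ)
    (hj : 0 < π (x j)) (hsteps : ∀ t, t + 1 < m → 0 < P (x (j + t)) (x (j + t + 1))) :
    0 < wordDist P π g (fun i : Fin m => g (x (j + (i : ℕ)))) := by
  set y : Fin m → Y := fun i => g (x (j + (i : ℕ))) with hy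
  set xs₀ : Fin m → X := fun i => x (j + (i : ℕ)) with hxs
  have hterm : (0:ℝ) <
      if ∀ i, g (xs₀ i) = y i then
        ∏ i : Fin m,
          if (i : ℕ) = 0 then π (xs₀ i)
          else P (xs₀ ⟨(i : ℕ) - 1, lt_of_le_of_lt (Nat.sub_le _ _) i.isLt⟩) (xs₀ i)
      else 0 := by
    rw [if_pos (fun i => rfl)]
    refine Finset.prod_pos fun i _ => ?_
    split
    · next h => simpa [hxs, h] using hj
    · next h =>
      have h1 : 1 ≤ (i : ℕ) := Nat.one_le_iff_ne_zero.2 h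
      have := hsteps ((i : ℕ) - 1) (by omega)
      have heq : j + ((i : ℕ) - 1) + 1 = j + (i : ℕ) := by omega
      rw [heq] at this
      simpa [hxs] using this
  calc (0:ℝ) < _ := hterm
    _ ≤ wordDist P π g y := by
      refine Finset.single_le_sum (f := fun xs =>
        if ∀ i, g (xs i) = y i then
          ∏ i : Fin m,
            if (i : ℕ) = 0 then π (xs i)
            else P (xs ⟨(i : ℕ) - 1, lt_of_le_of_lt (Nat.sub_le _ _) i.isLt⟩) (xs i)
        else 0) (fun xs _ => ?_) (Finset.mem_univ xs₀)
      split
      · exact Finset.prod_nonneg fun i _ => by split <;> [exact hπnn _; exact hPnn _ _]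
      · exact le_rfl

lemma aux_exists_path_of_wordDist_pos (P : Matrix X X ℝ) (hPnn : ∀ i j, 0 ≤ P i j)
    (π : X → ℝ) (hπnn : ∀ i, 0 ≤ π i) (g : X → Y) {m : ℕ} (y : Fin m → Y)
    (h : 0 < wordDist P π g y) :
    ∃ xs : Fin m → X, (∀ i, g (xs i) = y i) ∧
      (∀ i : Fin m, (i : ℕ) = 0 → 0 < π (xs i)) ∧
      ∀ (t : ℕ) (ht : t + 1 < m),
        0 < P (xs ⟨t, by omega⟩) (xs ⟨t + 1, ht⟩) := by
  unfold wordDist at h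
  obtain ⟨xs, -, hxs⟩ := Finset.exists_lt_of_sum_lt (f := fun _ => (0:ℝ)) (by simpa using h)
  have hcond : ∀ i, g (xs i) = y i := by
    by_contra hc
    rw [if_neg hc] at hxs
    exact lt_irrefl _ hxs
  rw [if_pos hcond] at hxs
  have hfac : ∀ i : Fin m, 0 <
      (if (i : ℕ) = 0 then π (xs i)
        else P (xs ⟨(i : ℕ) - 1, lt_of_le_of_lt (Nat.sub_le _ _) i.isLt⟩) (xs i)) := by
    intro i
    by_contra hle
    push_neg at hle
    have hz : (if (i : ℕ) = 0 then π (xs i)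
        else P (xs ⟨(i : ℕ) - 1, lt_of_le_of_lt (Nat.sub_le _ _) i.isLt⟩) (xs i)) = 0 := by
      refine le_antisymm hle ?_
      split <;> [exact hπnn _; exact hPnn _ _]
    rw [Finset.prod_eq_zero (Finset.mem_univ i) hz] at hxs
    exact lt_irrefl _ hxs
  refine ⟨xs, hcond, ?_, ?_⟩
  · intro i hi
    have := hfac i
    rwa [if_pos hi] at this
  · intro t ht
    have := hfac ⟨t + 1, ht⟩
    rw [if_neg (by simp)] at this
    exact this

end AuxWord

lemma aux_doobLift_shift {Y : Type*} {k : ℕ} (hk : 0 < k) (Q : (Fin k → Y) → Y → ℝ)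
    (y : ℕ → Y) (j : ℕ) :
    doobLift Q hk (fun i : Fin k => y (j + (i : ℕ))) (fun i : Fin k => y (j + 1 + (i : ℕ))) =
      Q (fun i : Fin k => y (j + (i : ℕ))) (y (j + k)) := by
  unfold doobLift
  rw [Matrix.of_apply, if_pos]
  · congr 1
    show y (j + 1 + (k - 1)) = y (j + k)
    congr 1
    omega
  · intro i h
    show y (j + 1 + (i : ℕ)) = y (j + ((i : ℕ) + 1))
    congr 1
    omega

lemma aux_snoc_window {Y : Type*} {k : ℕ} (y : ℕ → Y) (j : ℕ) :
    (Fin.snoc (fun i : Fin k => y (j + (i : ℕ))) (y (j + k)) : Fin (k + 1) → Y)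
      = fun i : Fin (k + 1) => y (j + (i : ℕ)) := by
  funext i
  refine Fin.lastCases ?_ ?_ i
  · rw [Fin.snoc_last]
    simp
  · intro q
    rw [Fin.snoc_castSucc]
    simp

/-- all states in `S` communicate. With `Q` the `k`-th order Markov
approximation of the lumped process `g(X)` and `P_Q` its Doob lift on `Y^k`, all states of
`S = {w : p_k(w) > 0}` communicate under `P_Q`. -/
theorem positive_states_communicate
    {X Y : Type*} [Fintype X] [Fintype Y]
    (P : Matrix X X ℝ) (hP : IsStochastic P) (hrec : SingleRecurrentClass P)
    (π : X → ℝ) (hπ : IsProbDist π) (hπinv : ∀ j, ∑ i, π i * P i j = π j)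
    (hY : 1 < Fintype.card Y) (g : X → Y)
    (k : ℕ) (hk : 1 ≤ k)
    (Q : (Fin k → Y) → Y → ℝ)
    (hQ : ∀ (w : Fin k → Y) (z : Y), Q w z =
      if 0 < wordDist P π g w then wordDist P π g (Fin.snoc w z) / wordDist P π g w
      else 1 / (Fintype.card Y : ℝ)) :
    ∀ w w' : Fin k → Y, 0 < wordDist P π g w → 0 < wordDist P π g w' →
      ∃ n : ℕ, 1 ≤ n ∧ 0 < ((doobLift Q hk) ^ n) w w' := by
  obtain ⟨k', rfl⟩ : ∃ k', k = k' + 1 := ⟨k - 1, by omega⟩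
  intro w w' hw hw'
  obtain ⟨hPnn, hProw⟩ := hP
  obtain ⟨hπnn, hπsum⟩ := hπ
  -- extract positive paths for w and w'
  obtain ⟨a, hag, ha0, hastep⟩ := aux_exists_path_of_wordDist_pos P hPnn π hπnn g w hw
  obtain ⟨b, hbg, hb0, hbstep⟩ := aux_exists_path_of_wordDist_pos P hPnn π hπnn g w' hw'
  set a' : ℕ → X := fun i => a ⟨min i k', by omega⟩ with ha'
  set b' : ℕ → X := fun i => b ⟨min i k', by omega⟩ with hb'
  have ha'eq : ∀ i : Fin (k' + 1), a' (i : ℕ) = a i := by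
    intro i
    have : min (i : ℕ) k' = (i : ℕ) := Nat.min_eq_left (by omega)
    simp only [ha', this]
  have hb'eq : ∀ i : Fin (k' + 1), b' (i : ℕ) = b i := by
    intro i
    have : min (i : ℕ) k' = (i : ℕ) := Nat.min_eq_left (by omega)
    simp only [hb', this]
  have ha'step : ∀ t, t + 1 ≤ k' → 0 < P (a' t) (a' (t + 1)) := by
    intro t ht
    have h1 : a' t = a ⟨t, by omega⟩ := by
      simp only [ha', Nat.min_eq_left (by omega : t ≤ k')]
    have h2 : a' (t + 1) = a ⟨t + 1, by omega⟩ := by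
      simp only [ha', Nat.min_eq_left ht]
    rw [h1, h2]
    exact hastep t (by omega)
  have hb'step : ∀ t, t + 1 ≤ k' → 0 < P (b' t) (b' (t + 1)) := by
    intro t ht
    have h1 : b' t = b ⟨t, by omega⟩ := by
      simp only [hb', Nat.min_eq_left (by omega : t ≤ k')]
    have h2 : b' (t + 1) = b ⟨t + 1, by omega⟩ := by
      simp only [hb', Nat.min_eq_left ht]
    rw [h1, h2]
    exact hbstep t (by omega)
  have hπstep : ∀ {u v : X}, 0 < π u → 0 < P u v → 0 < π v := by
    intro u v hu huv
    calc (0:ℝ) < π u * P u v := mul_pos hu huv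
      _ ≤ ∑ i, π i * P i v := Finset.single_le_sum (f := fun i => π i * P i v)
          (fun i _ => mul_nonneg (hπnn i) (hPnn i _)) (Finset.mem_univ _)
      _ = π v := hπinv _
  have ha'0 : 0 < π (a' 0) := by
    rw [show a' 0 = a ⟨0, by omega⟩ from by simp [ha']]
    exact ha0 ⟨0, by omega⟩ rfl
  have hb'0 : 0 < π (b' 0) := by
    rw [show b' 0 = b ⟨0, by omega⟩ from by simp [hb']]
    exact hb0 ⟨0, by omega⟩ rfl
  have ha'pos : ∀ t, t ≤ k' → 0 < π (a' t) := by
    intro t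
    induction t with
    | zero => intro _; exact ha'0
    | succ t ih => intro ht; exact hπstep (ih (by omega)) (ha'step t ht)
  -- accessibility from end of a-path to start of b-path
  have hreca : Recurrent P (a' k') :=
    aux_recurrent_of_pi_pos P ⟨hPnn, hProw⟩ π hπnn hπinv (ha'pos k' le_rfl)
  have hrecb : Recurrent P (b' 0) :=
    aux_recurrent_of_pi_pos P ⟨hPnn, hProw⟩ π hπnn hπinv hb'0
  obtain ⟨m, hm1, hmpos⟩ := hrec.2 (a' k') (b' 0) hreca hrecb
  obtain ⟨c, hc0, hcm, hcs⟩ := aux_exists_path P hPnn m (a' k') (b' 0) hmpos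
  -- the concatenated path
  set x : ℕ → X := fun i =>
    if i ≤ k' then a' i else if i ≤ k' + m then c (i - k') else b' (i - (k' + m)) with hx
  have hxa : ∀ i, i ≤ k' → x i = a' i := by
    intro i hi; simp only [hx, if_pos hi]
  have hxc : ∀ i, k' ≤ i → i ≤ k' + m → x i = c (i - k') := by
    intro i h1 h2
    rcases Nat.eq_or_lt_of_le h1 with h | h
    · rw [hxa i (le_of_eq h.symm), ← h, Nat.sub_self, hc0]
    · simp only [hx, if_neg (by omega : ¬ i ≤ k'), if_pos h2]
  have hxb : ∀ i, k' + m ≤ i → x i = b' (i - (k' + m)) := by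
    intro i h1
    rcases Nat.eq_or_lt_of_le h1 with h | h
    · rw [hxc i (by omega) (le_of_eq h.symm)]
      have h2 : i - k' = m := by omega
      have h3 : i - (k' + m) = 0 := by omega
      rw [h2, hcm, h3]
    · simp only [hx, if_neg (by omega : ¬ i ≤ k'), if_neg (by omega : ¬ i ≤ k' + m)]
  have hstepsAll : ∀ t, t + 1 ≤ 2 * k' + m → 0 < P (x t) (x (t + 1)) := by
    intro t ht
    rcases Nat.lt_or_ge (t + 1) (k' + 1) with h1 | h1
    · rw [hxa t (by omega), hxa (t + 1) (by omega)]
      exact ha'step t (by omega)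
    · rcases Nat.lt_or_ge t (k' + m) with h2 | h2
      · rw [hxc t (by omega) (by omega), hxc (t + 1) (by omega) (by omega)]
        have he : t + 1 - k' = (t - k') + 1 := by omega
        rw [he]
        exact hcs (t - k') (by omega)
      · rw [hxb t h2, hxb (t + 1) (by omega)]
        have he : t + 1 - (k' + m) = (t - (k' + m)) + 1 := by omega
        rw [he]
        exact hb'step (t - (k' + m)) (by omega)
  have hπall : ∀ t, t ≤ 2 * k' + m → 0 < π (x t) := by
    intro t
    induction t with
    | zero => intro _; rw [hxa 0 (by omega)]; exact ha'0
    | succ t ih => intro ht; exact hπstep (ih (by omega)) (hstepsAll t ht)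
  -- windows of the lumped word
  set y : ℕ → Y := fun i => g (x i) with hy
  have hwin : ∀ j, j ≤ k' + m →
      0 < wordDist P π g (fun i : Fin (k' + 1) => y (j + (i : ℕ))) := by
    intro j hj
    exact aux_wordDist_pos_of_path P hPnn π hπnn g x j (hπall j (by omega))
      (fun t ht => hstepsAll (j + t) (by omega))
  have hwin1 : ∀ j, j + 1 ≤ k' + m →
      0 < wordDist P π g (fun i : Fin (k' + 1 + 1) => y (j + (i : ℕ))) := by
    intro j hj
    exact aux_wordDist_pos_of_path P hPnn π hπnn g x j (hπall j (by omega))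
      (fun t ht => hstepsAll (j + t) (by omega))
  have hQpos : ∀ j, j + 1 ≤ k' + m →
      0 < Q (fun i : Fin (k' + 1) => y (j + (i : ℕ))) (y (j + (k' + 1))) := by
    intro j hj
    rw [hQ, if_pos (hwin j (by omega))]
    refine div_pos ?_ (hwin j (by omega))
    rw [aux_snoc_window y j]
    exact hwin1 j hj
  -- assemble the Doob-lift path
  set f : ℕ → (Fin (k' + 1) → Y) := fun j => fun i => y (j + (i : ℕ)) with hf
  have hQnn : ∀ v z, 0 ≤ Q v z := by
    intro v z
    rw [hQ]
    split
    · exact div_nonneg (aux_wordDist_nonneg P hPnn π hπnn g _) (le_of_lt (by assumption))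
    · positivity
  have hDnn : ∀ v v', 0 ≤ doobLift Q hk v v' := by
    intro v v'
    unfold doobLift
    rw [Matrix.of_apply]
    split
    · exact hQnn _ _
    · exact le_rfl
  have hfw : f 0 = w := by
    funext i
    show y (0 + (i : ℕ)) = w i
    rw [Nat.zero_add]
    show g (x (i : ℕ)) = w i
    rw [hxa (i : ℕ) (by omega), ha'eq i]
    exact hag i
  have hfw' : f (k' + m) = w' := by
    funext i
    show y (k' + m + (i : ℕ)) = w' i
    show g (x (k' + m + (i : ℕ))) = w' i
    rw [hxb (k' + m + (i : ℕ)) (by omega)]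
    have : k' + m + (i : ℕ) - (k' + m) = (i : ℕ) := by omega
    rw [this, hb'eq i]
    exact hbg i
  have hDpos : ∀ j, j + 1 ≤ k' + m → 0 < doobLift Q hk (f j) (f (j + 1)) := by
    intro j hj
    have hshift := aux_doobLift_shift hk Q y j
    have : f (j + 1) = fun i : Fin (k' + 1) => y (j + 1 + (i : ℕ)) := by
      funext i
      show y (j + 1 + (i : ℕ)) = _
      rfl
    rw [hf]
    show 0 < doobLift Q hk (fun i : Fin (k' + 1) => y (j + (i : ℕ)))
        (fun i : Fin (k' + 1) => y (j + 1 + (i : ℕ)))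
    rw [hshift]
    exact hQpos j hj
  refine ⟨k' + m, by omega, ?_⟩
  have hprod : 0 < ∏ j ∈ Finset.range (k' + m),
      doobLift Q hk (f j) (f (j + 1)) :=
    Finset.prod_pos fun j hj => hDpos j (by
      have := Finset.mem_range.1 hj; omega)
  calc (0:ℝ) < ∏ j ∈ Finset.range (k' + m), doobLift Q hk (f j) (f (j + 1)) := hprod
    _ ≤ ((doobLift Q hk) ^ (k' + m)) (f 0) (f (k' + m)) :=
        aux_pow_entry_ge_prod (doobLift Q hk) hDnn f (k' + m)
    _ = ((doobLift Q hk) ^ (k' + m)) w w' := by rw [hfw, hfw']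
end
end
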